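/- Let T be a bounded linear operator on a complex Hilbert space H, let 0 < t < 1, and set r = min{t, 1−t} and R = max{t, 1−t}. Then ‖T‖ ≤ ω(T) + (‖T‖ − ‖(1−t)T + tT*‖)/(2r) − (ω(T) − ω((1−t)T + tT*))/(2R). In particular, (ω(T) − ω((1−t)T + tT*))/(2R) ≤ (‖T‖ − ‖(1−t)T + tT*‖)/(2r). -/

import Mathlib

/-! With `A = ℜ T = (T + T†)/2`, the operators `T`, `A` and `S = (1 - t)T + tT†` all have the
real quadratic form `x ↦ re ⟪T x, x⟫`. For self-adjoint `A`, `‖A‖ = sup_{‖x‖ = 1} |re ⟪A x, x⟫|`,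
hence `‖A‖ ≤ ω(T)` and `‖A‖ ≤ ω(S)`. Writing `S = (1 - 2r)X + 2rA` with `X = T` or `X = T†`
gives `‖S‖ ≤ (1 - 2r)‖T‖ + 2r‖A‖`, i.e. `‖T‖ - ‖A‖ ≤ (‖T‖ - ‖S‖)/(2r)`, while
`(ω(T) - ω(S))/(2R) ≤ ω(T) - ‖A‖` because `2R ≥ 1`. Both inequalities follow by adding these. -/

open ContinuousLinearMap

/-- The numerical radius of a bounded operator on a complex inner product space:
`ω(T) = sup { |⟨Tx, x⟩| : ‖x‖ = 1 }`. -/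
noncomputable def numRadius {E : Type*} [NormedAddCommGroup E] [InnerProductSpace ℂ E]
    (T : E →L[ℂ] E) : ℝ :=
  ⨆ x : { x : E // ‖x‖ = 1 }, ‖(inner ℂ (T x) (x : E) : ℂ)‖

open ComplexStarModule

section NumRadius

variable {E : Type*} [NormedAddCommGroup E] [InnerProductSpace ℂ E]

lemma norm_inner_self_le_norm_of_norm_eq_one (T : E →L[ℂ] E) {x : E} (hx : ‖x‖ = 1) :
    ‖(inner ℂ (T x) x : ℂ)‖ ≤ ‖T‖ :=
  calc ‖(inner ℂ (T x) x : ℂ)‖ ≤ ‖T x‖ * ‖x‖ := norm_inner_le_norm _ _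
    _ ≤ ‖T‖ * ‖x‖ * ‖x‖ := by gcongr; exact T.le_opNorm x
    _ = ‖T‖ := by rw [hx, mul_one, mul_one]

lemma numRadius_le_norm (T : E →L[ℂ] E) : numRadius T ≤ ‖T‖ :=
  Real.iSup_le (fun x => norm_inner_self_le_norm_of_norm_eq_one T x.2) (norm_nonneg T)

lemma norm_inner_self_le_numRadius (T : E →L[ℂ] E) {x : E} (hx : ‖x‖ = 1) :
    ‖(inner ℂ (T x) x : ℂ)‖ ≤ numRadius T :=
  le_ciSup (f := fun x : { x : E // ‖x‖ = 1 } => ‖(inner ℂ (T x) (x : E) : ℂ)‖)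
    ⟨‖T‖, Set.forall_mem_range.2 fun x => norm_inner_self_le_norm_of_norm_eq_one T x.2⟩ ⟨x, hx⟩

lemma numRadius_nonneg (T : E →L[ℂ] E) : 0 ≤ numRadius T :=
  Real.iSup_nonneg fun _ => norm_nonneg _

lemma abs_rayleighQuotient_le_numRadius (T : E →L[ℂ] E) (x : E) :
    |T.rayleighQuotient x| ≤ numRadius T := by
  rcases eq_or_ne x 0 with rfl | hx
  · simpa using numRadius_nonneg T
  have hx' : (‖x‖⁻¹ : ℂ) ≠ 0 := by simpa using hx
  have hu : ‖(‖x‖⁻¹ : ℂ) • x‖ = 1 := by simp [norm_smul, hx]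
  rw [← T.rayleigh_smul x hx', rayleighQuotient, hu, one_pow, div_one, reApplyInnerSelf_apply]
  exact (RCLike.abs_re_le_norm _).trans (norm_inner_self_le_numRadius T hu)

lemma norm_le_numRadius_of_reApplyInnerSelf_eq {A T : E →L[ℂ] E}
    (hA : (A : E →ₗ[ℂ] E).IsSymmetric) (h : ∀ x, A.reApplyInnerSelf x = T.reApplyInnerSelf x) : ‖A‖ ≤ numRadius T := by
  rw [A.norm_eq_iSup_rayleighQuotient hA]
  exact ciSup_le fun x => by
    simpa only [rayleighQuotient, h] using abs_rayleighQuotient_le_numRadius T x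

end NumRadius

section Adjoint

variable {E : Type*} [NormedAddCommGroup E] [InnerProductSpace ℂ E] [CompleteSpace E]

lemma reApplyInnerSelf_adjoint (T : E →L[ℂ] E) (x : E) :
    (adjoint T).reApplyInnerSelf x = T.reApplyInnerSelf x := by
  rw [reApplyInnerSelf_apply, reApplyInnerSelf_apply, adjoint_inner_left, ← inner_conj_symm,
    RCLike.conj_re]

lemma reApplyInnerSelf_smul_add_smul_adjoint (T : E →L[ℂ] E) {s t : ℝ} (hst : s + t = 1)
    (x : E) : ((s : ℂ) • T + (t : ℂ) • adjoint T).reApplyInnerSelf x = T.reApplyInnerSelf x := by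
  have h := reApplyInnerSelf_adjoint T x
  simp only [reApplyInnerSelf_apply, RCLike.re_to_complex] at h ⊢
  simp only [add_apply, smul_apply, inner_add_left, inner_smul_left, Complex.conj_ofReal,
    Complex.add_re, Complex.re_ofReal_mul, h, ← add_mul, hst, one_mul]

lemma realPart_eq_smul_add_smul_adjoint (T : E →L[ℂ] E) :
    (ℜ T : E →L[ℂ] E) = ((2⁻¹ : ℝ) : ℂ) • T + ((2⁻¹ : ℝ) : ℂ) • adjoint T := by
  rw [realPart_apply_coe, star_eq_adjoint, Complex.coe_smul, Complex.coe_smul, smul_add]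

lemma reApplyInnerSelf_realPart (T : E →L[ℂ] E) (x : E) :
    (ℜ T : E →L[ℂ] E).reApplyInnerSelf x = T.reApplyInnerSelf x := by
  rw [realPart_eq_smul_add_smul_adjoint, reApplyInnerSelf_smul_add_smul_adjoint T (by norm_num)]

lemma norm_smul_add_smul_adjoint_le (T : E →L[ℂ] E) {t : ℝ} (ht0 : 0 ≤ t) (ht1 : t ≤ 1) :
    ‖((1 - t : ℝ) : ℂ) • T + ((t : ℝ) : ℂ) • adjoint T‖ ≤
      (1 - 2 * min t (1 - t)) * ‖T‖ + 2 * min t (1 - t) * ‖(ℜ T : E →L[ℂ] E)‖ := by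
  have norm_smul_add_smul_le {a b : ℝ} (ha : 0 ≤ a) (hb : 0 ≤ b) (X Y : E →L[ℂ] E) :
      ‖(a : ℂ) • X + (b : ℂ) • Y‖ ≤ a * ‖X‖ + b * ‖Y‖ := by
    refine (norm_add_le _ _).trans_eq ?_
    rw [norm_smul, norm_smul, Complex.norm_real, Complex.norm_real, Real.norm_of_nonneg ha,
      Real.norm_of_nonneg hb]
  rcases le_total t (1 - t) with h | h
  · have hS : ((1 - t : ℝ) : ℂ) • T + ((t : ℝ) : ℂ) • adjoint T =
        ((1 - 2 * t : ℝ) : ℂ) • T + ((2 * t : ℝ) : ℂ) • (ℜ T : E →L[ℂ] E) := by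
      rw [realPart_eq_smul_add_smul_adjoint]; push_cast; module
    rw [min_eq_left h, hS]
    exact norm_smul_add_smul_le (by linarith) (by linarith) _ _
  · have hS : ((1 - t : ℝ) : ℂ) • T + ((t : ℝ) : ℂ) • adjoint T =
        ((1 - 2 * (1 - t) : ℝ) : ℂ) • adjoint T +
          ((2 * (1 - t) : ℝ) : ℂ) • (ℜ T : E →L[ℂ] E) := by
      rw [realPart_eq_smul_add_smul_adjoint]; push_cast; module
    rw [min_eq_right h, hS, ← adjoint.norm_map T]
    exact norm_smul_add_smul_le (by linarith) (by linarith) _ _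

end Adjoint

/-- For `0 < t < 1`, `r = min{t,1−t}`, `R = max{t,1−t}`:
`‖T‖ ≤ ω(T) + (‖T‖ − ‖(1−t)T+tT*‖)/(2r) − (ω(T) − ω((1−t)T+tT*))/(2R)`, and in particular
`(ω(T) − ω((1−t)T+tT*))/(2R) ≤ (‖T‖ − ‖(1−t)T+tT*‖)/(2r)`. -/
theorem stmt_12 {H : Type*} [NormedAddCommGroup H] [InnerProductSpace ℂ H] [CompleteSpace H]
    (T : H →L[ℂ] H) (t r R : ℝ) (ht0 : 0 < t) (ht1 : t < 1)
    (hr : r = min t (1 - t)) (hR : R = max t (1 - t)) :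
    ‖T‖ ≤
        numRadius T +
          (‖T‖ - ‖((1 - t : ℝ) : ℂ) • T + ((t : ℝ) : ℂ) • adjoint T‖) / (2 * r) -
          (numRadius T - numRadius (((1 - t : ℝ) : ℂ) • T + ((t : ℝ) : ℂ) • adjoint T)) /
            (2 * R) ∧
      (numRadius T - numRadius (((1 - t : ℝ) : ℂ) • T + ((t : ℝ) : ℂ) • adjoint T)) / (2 * R) ≤
        (‖T‖ - ‖((1 - t : ℝ) : ℂ) • T + ((t : ℝ) : ℂ) • adjoint T‖) / (2 * r) := by
  set S := ((1 - t : ℝ) : ℂ) • T + ((t : ℝ) : ℂ) • adjoint T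
  set A : H →L[ℂ] H := (ℜ T : H →L[ℂ] H)
  have hA : (A : H →ₗ[ℂ] H).IsSymmetric := (ℜ T).2.isSymmetric
  have hAT : ‖A‖ ≤ numRadius T :=
    norm_le_numRadius_of_reApplyInnerSelf_eq hA (reApplyInnerSelf_realPart T)
  have hAS : ‖A‖ ≤ numRadius S := norm_le_numRadius_of_reApplyInnerSelf_eq hA fun x => by
    rw [reApplyInnerSelf_realPart, reApplyInnerSelf_smul_add_smul_adjoint T (by ring)]
  have hS : ‖S‖ ≤ (1 - 2 * r) * ‖T‖ + 2 * r * ‖A‖ :=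
    hr ▸ norm_smul_add_smul_adjoint_le T ht0.le ht1.le
  have hr0 : 0 < r := hr ▸ lt_min ht0 (by linarith)
  have hR1 : 1 ≤ 2 * R := by rw [hR]; linarith [le_max_left t (1 - t), le_max_right t (1 - t)]
  have hnorm_gap : ‖T‖ - ‖A‖ ≤ (‖T‖ - ‖S‖) / (2 * r) := by
    rw [le_div_iff₀ (by linarith)]; linarith
  have hnumRadius_gap : (numRadius T - numRadius S) / (2 * R) ≤ numRadius T - ‖A‖ := by
    rw [div_le_iff₀ (by linarith)]
    linarith [mul_le_mul_of_nonneg_left hR1 (sub_nonneg.2 hAT)]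
  constructor <;> linarith [numRadius_le_norm T]
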